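/- arXiv:1908.01535 — 4 statements merged into one kernel-verified Lean document; each statement's English description precedes it below -/
import Mathlib

section
/- A coatom X of a simple matroid M on ground set E is modular if and only if for any two distinct atoms e, e' in E \ X there exists an atom e'' in X such that {e, e', e''} is a circuit of M. -/
open scoped Classical

namespace Paper

variable {α : Type*}

/-- The rank of a set in a matroid: the maximum size of an independent subset. -/
noncomputable def mrk (M : Matroid α) (X : Set α) : ℕ :=
  sSup {n | ∃ I, M.Indep I ∧ I ⊆ X ∧ I.ncard = n}

/-- A circuit of a matroid: a minimal dependent subset of the ground set. -/
def Circuit (M : Matroid α) (C : Set α) : Prop :=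
  C ⊆ M.E ∧ ¬ M.Indep C ∧ ∀ D ⊂ C, M.Indep D

/-- A matroid is simple if every subset of the ground set with at most two
elements is independent. -/
def SimpleM (M : Matroid α) : Prop :=
  ∀ X ⊆ M.E, X.ncard ≤ 2 → M.Indep X

/-- A modular flat: a flat `X` with `r X + r Y = r (X ⊓ Y) + r (X ⊔ Y)` for every flat `Y`
(meet of flats is intersection; join is the closure of the union). -/
def ModularFlat (M : Matroid α) (X : Set α) : Prop :=
  M.IsFlat X ∧ ∀ Y, M.IsFlat Y →
    mrk M X + mrk M Y = mrk M (X ∩ Y) + mrk M (M.closure (X ∪ Y))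

/-- A matroid is round if its ground set is not the union of two proper flats. -/
def Round (M : Matroid α) : Prop :=
  ¬ ∃ F₁ F₂ : Set α, M.IsFlat F₁ ∧ M.IsFlat F₂ ∧ F₁ ≠ M.E ∧ F₂ ≠ M.E ∧ M.E = F₁ ∪ F₂

/-!
If `X` is a coatom flat and `Y ⊄ X` is a flat, then `cl (X ∪ Y)` has full rank `r X + 1`, so
modularity of `X` says exactly that `r Y = r (X ∩ Y) + 1` for every such `Y`. For the line `Y`
through two points `e, e'` outside `X` this means that the line meets `X` in a point `e''`, and
`{e, e', e''}` is a circuit since `M` is simple. Conversely, if every such line meets `X`, then a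
flat `Y ⊄ X` is spanned by `X ∩ Y` and any one point `a ∈ Y \ X`, because each other `b ∈ Y \ X`
lies on the line through `a` and a point of `X ∩ Y`.
-/

open Set

variable {M : Matroid α} {X Y Z C : Set α} {a b c e : α}

lemma _root_.Matroid.IsFlat.closure_subset_of_subset (hY : M.IsFlat Y) (h : X ⊆ Y) :
    M.closure X ⊆ Y :=
  hY.closure ▸ M.closure_subset_closure h

lemma Circuit.isCircuit (hC : Circuit M C) : M.IsCircuit C :=
  Matroid.isCircuit_iff_forall_ssubset.mpr ⟨⟨hC.2.1, hC.1⟩, hC.2.2⟩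

lemma Circuit.mem_closure_pair (hC : Circuit M {a, b, c}) (hca : c ≠ a) (hcb : c ≠ b) :
    c ∈ M.closure {a, b} := by
  have hdiff : ({a, b, c} : Set α) \ {c} = {a, b} := by
    ext x
    simp only [mem_sdiff, mem_insert_iff, mem_singleton_iff]
    grind
  rw [← hdiff]
  exact hC.isCircuit.mem_closure_sdiff_singleton_of_mem (by simp)

lemma SimpleM.circuit_of_not_indep (hM : SimpleM M) (hC : C.Finite) (hCE : C ⊆ M.E)
    (hC3 : C.ncard ≤ 3) (hdep : ¬ M.Indep C) : Circuit M C :=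
  ⟨hCE, hdep, fun D hD => hM D (hD.subset.trans hCE) (by have := ncard_lt_ncard hD hC; omega)⟩

lemma SimpleM.circuit_of_mem_closure_pair {e' e'' : α} (hM : SimpleM M) (hpair : M.Indep {e, e'})
    (hcl : e'' ∈ M.closure {e, e'}) (he'' : e'' ∉ ({e, e'} : Set α)) : Circuit M {e, e', e''} := by
  have hswap : ({e, e', e''} : Set α) = insert e'' {e, e'} := by
    ext x
    simp only [mem_insert_iff, mem_singleton_iff]
    tauto
  refine hM.circuit_of_not_indep (toFinite _) ?_ ?_ ?_
  · rw [hswap]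
    exact insert_subset (M.mem_ground_of_mem_closure hcl) hpair.subset_ground
  · rw [hswap]
    exact (ncard_insert_le _ _).trans
      (Nat.add_le_add_right ((ncard_insert_le _ _).trans (by simp)) 1)
  · rw [hswap, hpair.insert_indep_iff_of_notMem he'']
    exact fun h => h.2 hcl

lemma subset_closure_insert_inter_of_forall_circuit (hY : M.IsFlat Y)
    (ha : a ∈ Y \ X) (hcirc : ∀ e e' : α, e ∈ M.E \ X → e' ∈ M.E \ X → e ≠ e' →
      ∃ e'' ∈ X, Circuit M {e, e', e''}) :
    Y ⊆ M.closure (insert a (X ∩ Y)) := by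
  have hYE := hY.subset_ground
  have hspanE : insert a (X ∩ Y) ⊆ M.E := insert_subset (hYE ha.1) (inter_subset_right.trans hYE)
  intro b hbY
  by_cases hbX : b ∈ X
  · exact M.subset_closure _ hspanE (Or.inr ⟨hbX, hbY⟩)
  obtain rfl | hab := eq_or_ne a b
  · exact M.mem_closure_of_mem (mem_insert _ _) hspanE
  obtain ⟨c, hcX, hC⟩ := hcirc a b ⟨hYE ha.1, ha.2⟩ ⟨hYE hbY, hbX⟩ hab
  have hca : c ≠ a := ne_of_mem_of_not_mem hcX ha.2
  have hcb : c ≠ b := ne_of_mem_of_not_mem hcX hbX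
  have hcY : c ∈ Y :=
    hY.closure_subset_of_subset (pair_subset ha.1 hbY) (hC.mem_closure_pair hca hcb)
  rw [pair_comm b c] at hC
  have hcspan : c ∈ insert a (X ∩ Y) := mem_insert_of_mem a ⟨hcX, hcY⟩
  exact M.closure_subset_closure (pair_subset (mem_insert _ _) hcspan)
    (hC.mem_closure_pair hab.symm hcb.symm)

section Rank

variable [M.RankFinite]

lemma cast_mrk_eq_eRk : (mrk M X : ℕ∞) = M.eRk X := by
  obtain ⟨I, hI⟩ := M.exists_isBasis' X
  have hmax : IsGreatest {n | ∃ J, M.Indep J ∧ J ⊆ X ∧ J.ncard = n} I.ncard := by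
    refine ⟨⟨I, hI.indep, hI.subset, rfl⟩, ?_⟩
    rintro _ ⟨J, hJ, hJX, rfl⟩
    have := hJ.encard_le_eRk_of_subset hJX
    rw [← hI.encard_eq_eRk, ← hJ.finite.cast_ncard_eq, ← hI.indep.finite.cast_ncard_eq] at this
    exact_mod_cast this
  rw [mrk, hmax.csSup_eq, hI.indep.finite.cast_ncard_eq, hI.encard_eq_eRk]

lemma mrk_mono (h : X ⊆ Y) : mrk M X ≤ mrk M Y := by
  have := M.eRk_mono h
  rwa [← cast_mrk_eq_eRk, ← cast_mrk_eq_eRk, Nat.cast_le] at this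

lemma mrk_le_mrk_ground : mrk M X ≤ mrk M M.E := by
  have := M.eRk_le_eRank X
  rwa [← M.eRk_ground, ← cast_mrk_eq_eRk, ← cast_mrk_eq_eRk, Nat.cast_le] at this

lemma mrk_closure_eq : mrk M (M.closure X) = mrk M X := by
  have := M.eRk_closure_eq X
  rwa [← cast_mrk_eq_eRk, ← cast_mrk_eq_eRk, Nat.cast_inj] at this

lemma mrk_eq_ncard_of_indep {I : Set α} (hI : M.Indep I) : mrk M I = I.ncard := by
  have := hI.eRk_eq_encard
  rwa [← cast_mrk_eq_eRk, ← hI.finite.cast_ncard_eq, Nat.cast_inj] at this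

lemma mrk_insert_eq_add_one (he : e ∈ M.E \ M.closure X) : mrk M (insert e X) = mrk M X + 1 := by
  have := M.eRk_insert_eq_add_one he
  rwa [← cast_mrk_eq_eRk, ← cast_mrk_eq_eRk, ← Nat.cast_one, ← Nat.cast_add, Nat.cast_inj] at this

lemma mrk_eq_mrk_ground_of_insert_subset (hX : M.IsFlat X) (hXr : mrk M X + 1 = mrk M M.E)
    (he : e ∈ M.E \ X) (hZ : insert e X ⊆ Z) : mrk M Z = mrk M M.E := by
  refine mrk_le_mrk_ground.antisymm ?_
  calc mrk M M.E = mrk M (insert e X) := by rw [mrk_insert_eq_add_one (hX.closure.symm ▸ he), hXr]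
    _ ≤ mrk M Z := mrk_mono hZ

lemma modularFlat_iff_of_coatom (hX : M.IsFlat X) (hXr : mrk M X + 1 = mrk M M.E) :
    ModularFlat M X ↔ ∀ Y, M.IsFlat Y → ¬ Y ⊆ X → mrk M Y = mrk M (X ∩ Y) + 1 := by
  have hjoin : ∀ Y, M.IsFlat Y → ¬ Y ⊆ X → mrk M (M.closure (X ∪ Y)) = mrk M X + 1 := by
    intro Y hY hYX
    obtain ⟨a, haY, haX⟩ := not_subset.mp hYX
    rw [mrk_closure_eq, hXr]
    exact mrk_eq_mrk_ground_of_insert_subset hX hXr ⟨hY.subset_ground haY, haX⟩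
      (insert_subset (Or.inr haY) subset_union_left)
  refine ⟨fun h Y hY hYX => ?_, fun h => ⟨hX, fun Y hY => ?_⟩⟩
  · have := h.2 Y hY
    rw [hjoin Y hY hYX] at this
    omega
  · by_cases hYX : Y ⊆ X
    · rw [inter_eq_self_of_subset_right hYX, union_eq_self_of_subset_right hYX, hX.closure,
        add_comm]
    · rw [hjoin Y hY hYX, h Y hY hYX]
      ring

lemma mrk_eq_mrk_inter_add_one_of_forall_circuit (hX : M.IsFlat X) (hY : M.IsFlat Y)
    (hYX : ¬ Y ⊆ X) (hcirc : ∀ e e' : α, e ∈ M.E \ X → e' ∈ M.E \ X → e ≠ e' →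
      ∃ e'' ∈ X, Circuit M {e, e', e''}) :
    mrk M Y = mrk M (X ∩ Y) + 1 := by
  obtain ⟨a, haY, haX⟩ := not_subset.mp hYX
  have hspan : M.closure (insert a (X ∩ Y)) = Y :=
    (hY.closure_subset_of_subset (insert_subset haY inter_subset_right)).antisymm
      (subset_closure_insert_inter_of_forall_circuit hY ⟨haY, haX⟩ hcirc)
  have ha : a ∈ M.E \ M.closure (X ∩ Y) :=
    ⟨hY.subset_ground haY, fun h => haX (hX.closure_subset_of_subset inter_subset_left h)⟩
  rw [← mrk_insert_eq_add_one ha, ← mrk_closure_eq (X := insert a (X ∩ Y)), hspan]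

end Rank

/-- Brylawski: a coatom `X` of a simple matroid is modular iff any two distinct
elements outside `X` form a circuit with some element of `X`. -/
theorem stmt0 (M : Matroid α) (hfin : M.E.Finite) (hsimple : SimpleM M)
    {X : Set α} (hflat : M.IsFlat X) (hcoatom : mrk M X + 1 = mrk M M.E) :
    ModularFlat M X ↔
      ∀ e e' : α, e ∈ M.E \ X → e' ∈ M.E \ X → e ≠ e' →
        ∃ e'' ∈ X, Circuit M {e, e', e''} := by
  have : M.Finite := ⟨hfin⟩
  rw [modularFlat_iff_of_coatom hflat hcoatom]
  refine ⟨fun hmod e e' he he' hne => ?_, fun hcirc Y hY hYX => ?_⟩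
  · have hpairE : {e, e'} ⊆ M.E := pair_subset he.1 he'.1
    have hpair : M.Indep {e, e'} := hsimple _ hpairE (ncard_pair hne).le
    have hline := hmod (M.closure {e, e'}) (M.isFlat_closure _)
      fun h => he.2 (h (M.mem_closure_of_mem (mem_insert _ _) hpairE))
    rw [mrk_closure_eq, mrk_eq_ncard_of_indep hpair, ncard_pair hne] at hline
    obtain ⟨e'', he''X, he''L⟩ : (X ∩ M.closure {e, e'}).Nonempty := by
      refine nonempty_iff_ne_empty.mpr fun h => ?_
      rw [h, mrk_eq_ncard_of_indep M.empty_indep, ncard_empty] at hline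
      omega
    refine ⟨e'', he''X, hsimple.circuit_of_mem_closure_pair hpair he''L ?_⟩
    rintro (rfl | rfl)
    exacts [he.2 he''X, he'.2 he''X]
  · exact mrk_eq_mrk_inter_add_one_of_forall_circuit hflat hY hYX hcirc

end Paper
end

section
/- If X is a modular flat of a simple matroid M and Y is a modular flat of the restriction M|X, then Y is a modular flat of M. -/
open scoped Classical Matroid

namespace Paper

variable {α : Type*}

open Set Matroid

variable {M : Matroid α} {A B F X Y : Set α}

lemma natCast_mrk [M.RankFinite] (A : Set α) : (mrk M A : ℕ∞) = M.eRk A := by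
  obtain ⟨I, hI⟩ := M.exists_isBasis' A
  have hIfin : I.Finite := hI.finite_of_isRkFinite (RankFinite.isRkFinite A)
  have hmax : IsGreatest {n | ∃ J, M.Indep J ∧ J ⊆ A ∧ J.ncard = n} I.ncard := by
    refine ⟨⟨I, hI.indep, hI.subset, rfl⟩, ?_⟩
    rintro _ ⟨J, hJ, hJA, rfl⟩
    have hJI : J.encard ≤ I.encard := hI.eRk_eq_encard ▸ hJ.encard_le_eRk_of_subset hJA
    have hJfin : J.Finite := finite_of_encard_le_coe (hIfin.cast_ncard_eq ▸ hJI)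
    exact_mod_cast hJfin.cast_ncard_eq ▸ hIfin.cast_ncard_eq ▸ hJI
  rw [mrk, hmax.csSup_eq, hIfin.cast_ncard_eq, hI.eRk_eq_encard]

lemma mrk_closure [M.RankFinite] (A : Set α) : mrk M (M.closure A) = mrk M A := by
  have h := M.eRk_closure_eq A
  rw [← natCast_mrk, ← natCast_mrk] at h
  exact_mod_cast h

lemma mrk_mono_s2 [M.RankFinite] (hAB : A ⊆ B) : mrk M A ≤ mrk M B := by
  have h := M.eRk_mono hAB
  rw [← natCast_mrk, ← natCast_mrk] at h
  exact_mod_cast h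

lemma mrk_inter_add_mrk_union_le [M.RankFinite] (A B : Set α) :
    mrk M (A ∩ B) + mrk M (A ∪ B) ≤ mrk M A + mrk M B := by
  have h := M.eRk_inter_add_eRk_union_le A B
  simp only [← natCast_mrk] at h
  exact_mod_cast h

lemma mrk_restrict (hAX : A ⊆ X) : mrk (M ↾ X) A = mrk M A := by
  unfold mrk
  congr 1
  ext n
  constructor <;> rintro ⟨I, hI, hIA, rfl⟩
  · exact ⟨I, (restrict_indep_iff.1 hI).1, hIA, rfl⟩
  · exact ⟨I, restrict_indep_iff.2 ⟨hI, hIA.trans hAX⟩, hIA, rfl⟩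

lemma _root_.Matroid.IsFlat.restrict_inter (hF : M.IsFlat F) (hX : X ⊆ M.E) :
    (M ↾ X).IsFlat (X ∩ F) := by
  rw [isFlat_iff_closure_eq, restrict_closure_eq _ inter_subset_left hX]
  refine (subset_inter inter_subset_right ?_).antisymm (subset_inter ?_ inter_subset_left)
  · exact inter_subset_left.trans
      ((M.closure_subset_closure inter_subset_right).trans_eq hF.closure)
  · exact M.subset_closure _ (inter_subset_left.trans hX)

lemma _root_.Matroid.IsFlat.isFlat_of_restrict (hX : M.IsFlat X) (hY : (M ↾ X).IsFlat Y) :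
    M.IsFlat Y := by
  have hYX : Y ⊆ X := hY.subset_ground
  rw [isFlat_iff_closure_eq, restrict_closure_eq _ hYX hX.subset_ground] at hY
  have hclY : M.closure Y ⊆ X := (M.closure_subset_closure hYX).trans_eq hX.closure
  rw [isFlat_iff_closure_eq, ← inter_eq_left.2 hclY, hY]

/-- Put `W = cl (Y ∪ F)`. Modularity of `X` gives `r (X ∩ W) - r (X ∩ F) ≤ r W - r F`;
modularity of `Y` in `M ↾ X` against the flat `X ∩ F` gives
`r Y + r (X ∩ F) = r (Y ∩ F) + r (Y ∪ (X ∩ F))`, and `Y ∪ (X ∩ F) ⊆ X ∩ W`. -/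
lemma mrk_add_mrk_le_of_modularFlat_restrict [M.RankFinite] (hX : ModularFlat M X)
    (hY : ModularFlat (M ↾ X) Y) (hF : M.IsFlat F) :
    mrk M Y + mrk M F ≤ mrk M (Y ∩ F) + mrk M (Y ∪ F) := by
  have hXE : X ⊆ M.E := hX.1.subset_ground
  have hYX : Y ⊆ X := hY.1.subset_ground
  set W := M.closure (Y ∪ F)
  have hFW : F ⊆ W := M.subset_closure_of_subset' subset_union_right hF.subset_ground
  have hYW : Y ⊆ W := M.subset_closure_of_subset' subset_union_left (hYX.trans hXE)
  have hXF := hX.2 F hF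
  have hXW := hX.2 W (M.isFlat_closure _)
  have hYXF := hY.2 (X ∩ F) (hF.restrict_inter hXE)
  rw [mrk_closure, mrk_restrict hYX, mrk_restrict inter_subset_left,
    mrk_restrict (inter_subset_left.trans hYX), mrk_restrict (union_subset hYX inter_subset_left),
    ← inter_assoc, inter_eq_left.2 hYX] at hYXF
  have h₁ : mrk M (Y ∪ (X ∩ F)) ≤ mrk M (X ∩ W) :=
    mrk_mono_s2 (subset_inter (union_subset hYX inter_subset_left)
      (union_subset hYW (inter_subset_right.trans hFW)))
  have h₂ : mrk M (M.closure (X ∪ F)) ≤ mrk M (M.closure (X ∪ W)) :=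
    mrk_mono_s2 (M.closure_subset_closure (union_subset_union_right _ hFW))
  have h₃ : mrk M W = mrk M (Y ∪ F) := mrk_closure _
  omega

lemma ModularFlat.of_restrict [M.RankFinite] (hX : ModularFlat M X)
    (hY : ModularFlat (M ↾ X) Y) : ModularFlat M Y := by
  refine ⟨hX.1.isFlat_of_restrict hY.1, fun F hF => ?_⟩
  rw [mrk_closure]
  exact (mrk_add_mrk_le_of_modularFlat_restrict hX hY hF).antisymm
    (mrk_inter_add_mrk_union_le Y F)

theorem stmt2_general (M : Matroid α) (hfin : M.E.Finite)
    {X Y : Set α} (hX : ModularFlat M X) (hY : ModularFlat (M ↾ X) Y) :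
    ModularFlat M Y :=
  have : M.Finite := ⟨hfin⟩
  hX.of_restrict hY

/-- A modular flat of the restriction to a modular flat is a modular flat. -/
theorem stmt2 (M : Matroid α) (hfin : M.E.Finite) (hsimple : SimpleM M)
    {X Y : Set α} (hX : ModularFlat M X) (hY : ModularFlat (M ↾ X) Y) :
    ModularFlat M Y :=
  stmt2_general M hfin hX hY

end Paper
end

section
/- If X is a modular element of a geometric lattice L, then the characteristic polynomial χ([0̂, X], t) divides the characteristic polynomial χ(L, t) in ℤ[t]. -/
open scoped Classical

namespace Paper

/-- A geometric lattice with rank function `r`: `r ⊥ = 0`, `r` increases by one along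
covers, `r` is strictly monotone and submodular, and every element is a join of atoms. -/
def IsGeometric (L : Type*) [Lattice L] [BoundedOrder L] [Fintype L] (r : L → ℕ) : Prop :=
  r ⊥ = 0 ∧ (∀ a b : L, a ⋖ b → r b = r a + 1) ∧ (∀ a b : L, a < b → r a < r b) ∧
  (∀ a b : L, r (a ⊔ b) + r (a ⊓ b) ≤ r a + r b) ∧
  (∀ x : L, ∃ s : Set L, (∀ a ∈ s, IsAtom a) ∧ IsLUB s x)

/-- A modular element of a lattice with rank function `r`. -/
def ModularElt {L : Type*} [Lattice L] (r : L → ℕ) (x : L) : Prop :=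
  ∀ y : L, r x + r y = r (x ⊓ y) + r (x ⊔ y)

/-- Möbius function (measured from the bottom) of a finite lattice. -/
noncomputable def lmob (L : Type*) [Lattice L] [OrderBot L] [Fintype L] : L → ℤ
  | x =>
    if x = ⊥ then 1
    else - ∑ y ∈ (Finset.univ.filter (fun y : L => y < x)).attach, lmob L y.1
termination_by x => (Finset.univ.filter (fun y : L => y < x)).card
decreasing_by
  · have hy := y.2
    simp only [Finset.mem_filter] at hy
    apply Finset.card_lt_card
    constructor
    · intro z hz
      simp only [Finset.mem_filter, Finset.mem_univ, true_and] at hz ⊢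
      exact hz.trans hy.2
    · intro hsub
      have := hsub (Finset.mem_filter.mpr ⟨Finset.mem_univ _, hy.2⟩)
      simp only [Finset.mem_filter] at this
      exact lt_irrefl _ this.2

/-- The characteristic polynomial of a finite bounded lattice with rank function `r`:
`χ(L, t) = ∑_{x ∈ L} μ(x) t^(r ⊤ - r x)`. -/
noncomputable def charPolyL (L : Type*) [Lattice L] [BoundedOrder L] [Fintype L]
    (r : L → ℕ) : Polynomial ℤ :=
  ∑ x : L, Polynomial.C (lmob L x) * Polynomial.X ^ (r ⊤ - r x)

/-! In every finite lattice, `μ(x) = ∑ μ(a) μ(b)` over the pairs with `a ≤ X`, `b ⊓ X = ⊥` and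
`a ⊔ b = x`: both sides satisfy the recursion `∑_{y ≤ x} f y = [x = ⊥]` that determines `μ`, since
the pairs with `a ⊔ b ≤ x` split as a product. When `X` is modular the rank is additive on these
pairs, `r (a ⊔ b) = r a + r b`, so the term of `(a, b)` in `χ(L, t)` factors as
`μ(a) t^(r X - r a) · μ(b) t^(r ⊤ - r X - r b)`, and `χ(L, t) = χ([⊥, X], t) · q(t)` with
`q(t) = ∑_{b ⊓ X = ⊥} μ(b) t^(r ⊤ - r X - r b)`. -/

open Finset

theorem sum_filter_le_eq_add_sum_filter_lt {α M : Type*} [PartialOrder α] [Fintype α]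
    [AddCommMonoid M] (f : α → M) (x : α) :
    ∑ y with y ≤ x, f y = f x + ∑ y with y < x, f y := by
  rw [← sum_insert (by simp)]
  congr 1
  ext y
  simp [le_iff_lt_or_eq, or_comm]

section Mobius

variable {L : Type*} [Lattice L] [OrderBot L] [Fintype L]

theorem lmob_eq (x : L) :
    lmob L x = if x = ⊥ then 1 else -∑ y with y < x, lmob L y := by
  rw [lmob, sum_attach _ (lmob L)]

theorem sum_lmob_le (x : L) : ∑ y with y ≤ x, lmob L y = if x = ⊥ then 1 else 0 := by
  rw [sum_filter_le_eq_add_sum_filter_lt, lmob_eq]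
  split_ifs with hx
  · subst hx
    simp
  · ring

theorem eq_lmob_of_sum_le {f : L → ℤ} (hf : ∀ x, ∑ y with y ≤ x, f y = if x = ⊥ then 1 else 0) :
    f = lmob L := by
  funext x
  induction x using WellFoundedLT.induction with
  | ind x ih =>
    have hlt : ∑ y with y < x, f y = ∑ y with y < x, lmob L y :=
      sum_congr rfl fun y hy => ih y (mem_filter.mp hy).2
    have := (hf x).trans (sum_lmob_le x).symm
    rw [sum_filter_le_eq_add_sum_filter_lt, sum_filter_le_eq_add_sum_filter_lt, hlt] at this
    exact add_right_cancel this

theorem lmob_Iic (X : L) (y : Set.Iic X) : lmob (Set.Iic X) y = lmob L y := by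
  refine (congrFun (eq_lmob_of_sum_le (f := fun y : Set.Iic X => lmob L y) fun x => ?_) y).symm
  have hsum : ∑ y : Set.Iic X with y ≤ x, lmob L y = ∑ y with y ≤ (x : L), lmob L y := by
    refine sum_nbij' Subtype.val (fun y => if h : y ∈ Set.Iic X then ⟨y, h⟩ else ⊥) ?_ ?_ ?_ ?_ ?_
    · intro y hy
      simpa using hy
    · intro y hy
      simpa [(mem_filter.mp hy).2.trans x.2, ← Subtype.coe_le_coe] using hy
    · intro y _
      exact dif_pos y.2
    · intro y hy
      simp [(mem_filter.mp hy).2.trans x.2]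
    · intro y _
      rfl
  rw [hsum, sum_lmob_le, ← Subtype.coe_inj, Set.Iic.coe_bot]

theorem lmob_eq_sum_sup_eq (X x : L) :
    lmob L x = ∑ a with a ≤ X, ∑ b with b ⊓ X = ⊥,
      if a ⊔ b = x then lmob L a * lmob L b else 0 := by
  revert x
  rw [← funext_iff]
  refine (eq_lmob_of_sum_le fun x => ?_).symm
  calc ∑ y with y ≤ x, ∑ a with a ≤ X, ∑ b with b ⊓ X = ⊥,
        (if a ⊔ b = y then lmob L a * lmob L b else 0)
      = ∑ a with a ≤ X, ∑ b with b ⊓ X = ⊥,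
        if a ⊔ b ≤ x then lmob L a * lmob L b else 0 := by
        rw [sum_comm]
        refine sum_congr rfl fun a _ => ?_
        rw [sum_comm]
        refine sum_congr rfl fun b _ => ?_
        simp only [sum_ite_eq, mem_filter, mem_univ, true_and]
    _ = (∑ a with a ≤ X ⊓ x, lmob L a) * ∑ b with b ⊓ X = ⊥ ∧ b ≤ x, lmob L b := by
        simp only [sum_mul_sum, sum_filter, le_inf_iff, sup_le_iff]
        refine sum_congr rfl fun a _ => ?_
        by_cases ha : a ≤ x <;> by_cases haX : a ≤ X <;> simp [ha, haX, ite_and]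
    _ = if x = ⊥ then 1 else 0 := by
        rw [sum_lmob_le]
        by_cases hXx : X ⊓ x = ⊥
        · have hdisj : ∀ b ≤ x, b ⊓ X = ⊥ := fun b hb =>
            le_bot_iff.mp (hXx ▸ le_inf inf_le_right (inf_le_left.trans hb))
          simp only [hXx, if_true, one_mul]
          rw [← sum_lmob_le]
          exact sum_congr (by ext b; simpa using hdisj b) fun _ _ => rfl
        · have hx : x ≠ ⊥ := fun h => hXx (by simp [h])
          simp [hXx, hx]

theorem sum_lmob_smul {M : Type*} [AddCommGroup M] (X : L) (F : L → M) :
    ∑ x, lmob L x • F x =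
      ∑ a with a ≤ X, ∑ b with b ⊓ X = ⊥, (lmob L a * lmob L b) • F (a ⊔ b) := by
  calc ∑ x, lmob L x • F x
      = ∑ x, ∑ a with a ≤ X, ∑ b with b ⊓ X = ⊥,
          (if a ⊔ b = x then lmob L a * lmob L b else 0) • F x :=
        sum_congr rfl fun x _ => by rw [lmob_eq_sum_sup_eq X x]; simp only [sum_smul]
    _ = _ := by
        rw [sum_comm]
        refine sum_congr rfl fun a _ => ?_
        rw [sum_comm]
        refine sum_congr rfl fun b _ => ?_
        simp only [ite_smul, zero_smul, sum_ite_eq, mem_univ, if_true]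

end Mobius

/-- Modularity of `X` against `b` and against `a ⊔ b` gives `r (a ⊔ b) ≥ r a + r b`;
submodularity gives the reverse. -/
theorem rank_sup_eq_add_of_le_of_inf_eq_bot {L : Type*} [Lattice L] [OrderBot L] {r : L → ℕ}
    (hbot : r ⊥ = 0) (hmono : Monotone r) (hsub : ∀ a b : L, r (a ⊔ b) + r (a ⊓ b) ≤ r a + r b)
    {X a b : L} (hX : ModularElt r X) (ha : a ≤ X) (hb : b ⊓ X = ⊥) :
    r (a ⊔ b) = r a + r b := by
  have hab : a ⊓ b = ⊥ := le_bot_iff.mp (hb ▸ inf_comm b X ▸ inf_le_inf_right b ha)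
  have hXb := hX b
  have hXab := hX (a ⊔ b)
  rw [inf_comm, hb, hbot] at hXb
  rw [← sup_assoc, sup_eq_left.mpr ha] at hXab
  have hle : r a ≤ r (X ⊓ (a ⊔ b)) := hmono (le_inf ha le_sup_left)
  have hsubab := hsub a b
  rw [hab, hbot] at hsubab
  omega

theorem charPolyL_Iic {L : Type*} [Lattice L] [OrderBot L] [Fintype L] (r : L → ℕ) (X : L) :
    charPolyL (Set.Iic X) (fun y => r y.1) =
      ∑ a with a ≤ X, Polynomial.C (lmob L a) * Polynomial.X ^ (r X - r a) := by
  simp only [charPolyL, lmob_Iic]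
  exact (sum_subtype _ (by simp)
    fun a => Polynomial.C (lmob L a) * Polynomial.X ^ (r X - r a)).symm

/-- Stanley: if `X` is a modular element of a geometric lattice `L`, then
`χ([0̂, X], t)` divides `χ(L, t)`. -/
theorem stmt10 {L : Type*} [Lattice L] [BoundedOrder L] [Fintype L] (r : L → ℕ)
    (hgeom : IsGeometric L r) {X : L} (hX : ModularElt r X) :
    charPolyL (Set.Iic X) (fun y => r y.1) ∣ charPolyL L r := by
  obtain ⟨hbot, -, hstrict, hsub, -⟩ := hgeom
  have hmono : Monotone r := StrictMono.monotone hstrict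
  have hrank {a b : L} (ha : a ≤ X) (hb : b ⊓ X = ⊥) : r (a ⊔ b) = r a + r b :=
    rank_sup_eq_add_of_le_of_inf_eq_bot hbot hmono hsub hX ha hb
  have hχ : charPolyL L r = ∑ a with a ≤ X, ∑ b with b ⊓ X = ⊥,
      (lmob L a * lmob L b) • (Polynomial.X ^ (r ⊤ - r (a ⊔ b)) : Polynomial ℤ) := by
    simp only [charPolyL, ← Polynomial.smul_eq_C_mul]
    exact sum_lmob_smul X _
  refine ⟨∑ b with b ⊓ X = ⊥, Polynomial.C (lmob L b) * Polynomial.X ^ (r ⊤ - r X - r b), ?_⟩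
  rw [hχ, charPolyL_Iic, sum_mul_sum]
  refine sum_congr rfl fun a ha => sum_congr rfl fun b hb => ?_
  simp only [mem_filter, mem_univ, true_and] at ha hb
  have hexp : r ⊤ - r (a ⊔ b) = (r X - r a) + (r ⊤ - r X - r b) := by
    have hra : r a ≤ r X := hmono ha
    have hrXb : r (X ⊔ b) ≤ r ⊤ := hmono le_top
    have hrab := hrank ha hb
    have hXb := hrank le_rfl hb
    omega
  rw [hexp, pow_add, Polynomial.smul_eq_C_mul, Polynomial.C_mul]
  ring

end Paper
end

section
/- A nonempty subset X of the ground set E of a simple matroid M is a modular flat of M if and only if for every circuit C of M and every element e ∈ C \ X there exist an element x ∈ X and a circuit C' of M with e ∈ C' ⊆ {x} ∪ (C \ X). -/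
open scoped Classical

namespace Paper

variable {α : Type*}

/-!
For an independent set `I` and `e ∈ I \ X`, both directions turn on one dichotomy: either some
`x ∈ X ∩ cl I` lies outside `cl (I - e)`, or `e ∉ cl (X ∪ (I - e))`.

If `X` is a modular flat and `e ∈ cl (X ∪ (I - e))`, the modular equation for `X, cl I` against
submodularity for `X, cl (I - e)` gives `r (X ∩ cl (I - e)) < r (X ∩ cl I)`, so such an `x` exists.
For a circuit `C` meeting `X` take `I = C \ X`; the fundamental circuit of `x` in `I` must
contain `e`, and it is the short circuit.

Conversely, a short circuit through `e` puts `x` in `cl I`; if `X ∩ cl I ⊆ cl (I - e)` then `e`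
falls into `cl (I - e)`, which is absurd. For a flat `Y`, let `I` be a basis of `Y` extending a
basis of `X ∩ Y` and `B` a basis of `X` containing `I ∩ X`: then every `e ∈ I \ X` escapes
`cl (X ∪ (I - e))`, so `B ∪ I` is independent, which is the missing half of the modular equation.
Finally `X` is closed, since a short circuit for `e ∈ cl X \ X` would lie in `{x, e}`, which is
independent in a simple matroid.
-/

open Set Matroid

variable {M : Matroid α} {B C I X : Set α} {e x y : α}

lemma circuit_iff_isCircuit : Circuit M C ↔ M.IsCircuit C := by
  rw [isCircuit_iff_forall_ssubset, Dep, Circuit]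
  tauto

lemma mrk_eq_ncard_of_isBasis' [M.RankFinite] (hI : M.IsBasis' I X) : mrk M X = I.ncard := by
  refine IsGreatest.csSup_eq ⟨⟨I, hI.indep, hI.subset, rfl⟩, ?_⟩
  rintro _ ⟨J, hJ, hJX, rfl⟩
  have hle : J.encard ≤ I.encard := hI.encard_eq_eRk ▸ hJ.encard_le_eRk_of_subset hJX
  rwa [← hJ.finite.cast_ncard_eq, ← hI.indep.finite.cast_ncard_eq, Nat.cast_le] at hle

lemma coe_mrk (M : Matroid α) [M.RankFinite] (X : Set α) : (mrk M X : ℕ∞) = M.eRk X := by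
  obtain ⟨I, hI⟩ := M.exists_isBasis' X
  rw [mrk_eq_ncard_of_isBasis' hI, hI.indep.finite.cast_ncard_eq, hI.encard_eq_eRk]

lemma mrk_mono_s13 (M : Matroid α) [M.RankFinite] : Monotone (mrk M) := fun X Y hXY => by
  rw [← Nat.cast_le (α := ℕ∞), coe_mrk, coe_mrk]
  exact M.eRk_mono hXY

lemma ncard_le_mrk_of_indep [M.RankFinite] (hI : M.Indep I) (hIX : I ⊆ X) : I.ncard ≤ mrk M X := by
  rw [← mrk_eq_ncard_of_isBasis' hI.isBasis_self.isBasis']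
  exact mrk_mono_s13 M hIX

lemma mrk_inter_add_mrk_closure_union_le (M : Matroid α) [M.RankFinite] (X Y : Set α) :
    mrk M (X ∩ Y) + mrk M (M.closure (X ∪ Y)) ≤ mrk M X + mrk M Y := by
  rw [← Nat.cast_le (α := ℕ∞)]
  push_cast
  simp only [coe_mrk, eRk_closure_eq]
  exact M.eRk_inter_add_eRk_union_le X Y

def HasShortCircuits (M : Matroid α) (X : Set α) : Prop :=
  ∀ C, M.IsCircuit C → ∀ e ∈ C \ X,
    ∃ x ∈ X, ∃ C', M.IsCircuit C' ∧ e ∈ C' ∧ C' ⊆ insert x (C \ X)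

lemma SimpleM.not_isCircuit_of_subset_pair (hM : SimpleM M) (hCxy : C ⊆ {x, y}) :
    ¬ M.IsCircuit C := fun hC => by
  refine hC.not_indep (hM C hC.subset_ground ?_)
  calc C.ncard ≤ ({x, y} : Set α).ncard := ncard_le_ncard hCxy (toFinite _)
    _ ≤ ({y} : Set α).ncard + 1 := ncard_insert_le x {y}
    _ = 2 := by rw [ncard_singleton]

lemma HasShortCircuits.isFlat (hX : HasShortCircuits M X) (hM : SimpleM M) (hXE : X ⊆ M.E) :
    M.IsFlat X := by
  refine isFlat_iff_closure_eq.2 (subset_antisymm (fun e heX => by_contra fun heX' => ?_)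
    (M.subset_closure X hXE))
  obtain ⟨C, hCX, hC, heC⟩ := exists_isCircuit_of_mem_closure heX heX'
  obtain ⟨x, -, C', hC', -, hC'C⟩ := hX C hC e ⟨heC, heX'⟩
  have hCX' : C \ X ⊆ {e} := fun f ⟨hfC, hfX⟩ => (hCX hfC).resolve_right hfX
  exact hM.not_isCircuit_of_subset_pair (hC'C.trans (insert_subset_insert hCX')) hC'

lemma HasShortCircuits.notMem_closure_union (hX : HasShortCircuits M X) (hI : M.Indep I)
    (he : e ∈ I \ X) (hcl : X ∩ M.closure I ⊆ M.closure (I \ {e})) :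
    e ∉ M.closure (X ∪ (I \ {e})) := by
  intro hecl
  obtain ⟨C, hCsub, hC, heC⟩ :=
    exists_isCircuit_of_mem_closure hecl (by rintro (h | ⟨-, h⟩); exacts [he.2 h, h rfl])
  obtain ⟨x, hxX, C', hC', heC', hC'C⟩ := hX C hC e ⟨heC, he.2⟩
  have hCX : C \ X ⊆ I := fun f ⟨hfC, hfX⟩ => by
    rcases hCsub hfC with rfl | hf | hf
    exacts [he.1, absurd hf hfX, hf.1]
  have hC'I : C' \ {x} ⊆ I := fun f ⟨hf, hfx⟩ => hCX ((hC'C hf).resolve_left hfx)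
  have hxC' : x ∈ C' := by_contra fun h => hC'.not_indep (hI.subset fun f hf =>
    hC'I ⟨hf, by rintro rfl; exact h hf⟩)
  have hxcl : x ∈ M.closure (I \ {e}) :=
    hcl ⟨hxX, M.closure_subset_closure hC'I (hC'.mem_closure_sdiff_singleton_of_mem hxC')⟩
  have hC'e : C' \ {e} ⊆ insert x (I \ {e}) := fun f ⟨hf, hfe⟩ =>
    (hC'C hf).imp_right fun hfCX => ⟨hCX hfCX, hfe⟩
  refine hI.notMem_closure_sdiff_of_mem he.1 ?_
  rw [← closure_insert_eq_of_mem_closure hxcl]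
  exact M.closure_subset_closure hC'e (hC'.mem_closure_sdiff_singleton_of_mem heC')

lemma HasShortCircuits.indep_union (hX : HasShortCircuits M X) (hB : M.Indep B) (hBX : B ⊆ X)
    (hI : M.Indep I) (hIB : I ∩ X ⊆ B) (hcl : X ∩ M.closure I ⊆ M.closure (I ∩ X)) :
    M.Indep (B ∪ I) := by
  refine indep_iff_forall_subset_not_isCircuit'.2
    ⟨fun C hCBI hC => ?_, union_subset hB.subset_ground hI.subset_ground⟩
  obtain ⟨e, heC, heB⟩ := not_subset.1 fun h => hC.not_indep (hB.subset h)
  have heI : e ∈ I := (hCBI heC).resolve_left heB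
  have heX : e ∉ X := fun h => heB (hIB ⟨heI, h⟩)
  have hIX : I ∩ X ⊆ I \ {e} := fun f ⟨hfI, hfX⟩ => ⟨hfI, by rintro rfl; exact heX hfX⟩
  have hCe : C \ {e} ⊆ X ∪ (I \ {e}) := fun f ⟨hf, hfe⟩ =>
    (hCBI hf).imp (fun h => hBX h) fun h => ⟨h, hfe⟩
  exact hX.notMem_closure_union hI ⟨heI, heX⟩ (hcl.trans (M.closure_subset_closure hIX))
    (M.closure_subset_closure hCe (hC.mem_closure_sdiff_singleton_of_mem heC))

lemma HasShortCircuits.modularFlat [M.RankFinite] (hX : HasShortCircuits M X) (hM : SimpleM M)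
    (hXE : X ⊆ M.E) : ModularFlat M X := by
  refine ⟨hX.isFlat hM hXE, fun Y hY => ?_⟩
  obtain ⟨J, hJ⟩ := M.exists_isBasis (X ∩ Y) (inter_subset_left.trans hXE)
  obtain ⟨I, hI, hJI⟩ := hJ.indep.subset_isBasis_of_subset (hJ.subset.trans inter_subset_right)
    hY.subset_ground
  obtain ⟨B, hB, hIB⟩ := (hI.indep.inter_right X).subset_isBasis_of_subset inter_subset_right
  have hcl : X ∩ M.closure I ⊆ M.closure (I ∩ X) :=
    calc X ∩ M.closure I = X ∩ Y := by rw [hI.closure_eq_closure, hY.closure]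
      _ ⊆ M.closure J := hJ.subset_closure
      _ ⊆ M.closure (I ∩ X) :=
        M.closure_subset_closure (subset_inter hJI (hJ.subset.trans inter_subset_left))
  have hrX := mrk_eq_ncard_of_isBasis' hB.isBasis'
  have hrY := mrk_eq_ncard_of_isBasis' hI.isBasis'
  have hmeet : (B ∩ I).ncard ≤ mrk M (X ∩ Y) :=
    ncard_le_mrk_of_indep (hB.indep.inter_right I) (inter_subset_inter hB.subset hI.subset)
  have hjoin : (B ∪ I).ncard ≤ mrk M (M.closure (X ∪ Y)) :=
    ncard_le_mrk_of_indep (hX.indep_union hB.indep hB.subset hI.indep hIB hcl)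
      ((union_subset_union hB.subset hI.subset).trans
        (M.subset_closure _ (union_subset hXE hY.subset_ground)))
  have hcard := ncard_union_add_ncard_inter B I hB.indep.finite hI.indep.finite
  have hsubmod := mrk_inter_add_mrk_closure_union_le M X Y
  omega

lemma ModularFlat.exists_mem_closure_notMem_closure_sdiff [M.RankFinite] (hX : ModularFlat M X)
    (hI : M.Indep I) (he : e ∈ I) (hecl : e ∈ M.closure (X ∪ (I \ {e}))) :
    ∃ x ∈ X ∩ M.closure I, x ∉ M.closure (I \ {e}) := by
  refine not_subset.1 fun hsub => ?_
  have hIe : M.Indep (I \ {e}) := hI.subset sdiff_subset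
  have hjoin : M.closure (X ∪ M.closure I) = M.closure (X ∪ M.closure (I \ {e})) := by
    rw [closure_union_closure_right_eq, closure_union_closure_right_eq]
    conv_lhs =>
      rw [← insert_sdiff_self_of_mem he, union_insert, closure_insert_eq_of_mem_closure hecl]
  have hmod := hX.2 _ (M.isFlat_closure I)
  have hsubmod := mrk_inter_add_mrk_closure_union_le M X (M.closure (I \ {e}))
  have hrI := mrk_eq_ncard_of_isBasis' hI.isBasis_closure.isBasis'
  have hrIe := mrk_eq_ncard_of_isBasis' hIe.isBasis_closure.isBasis'
  have hcard := ncard_sdiff_singleton_add_one he hI.finite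
  have hmono := mrk_mono_s13 M (subset_inter inter_subset_left hsub : X ∩ M.closure I ⊆ _)
  rw [hjoin] at hmod
  omega

lemma ModularFlat.hasShortCircuits [M.RankFinite] (hX : ModularFlat M X) (hne : X.Nonempty) :
    HasShortCircuits M X := by
  intro C hC e he
  by_cases hCX : (C ∩ X).Nonempty
  swap
  · obtain ⟨x, hx⟩ := hne
    exact ⟨x, hx, C, hC, he.1, fun f hf => Or.inr ⟨hf, fun hfX => hCX ⟨f, hf, hfX⟩⟩⟩
  have hI : M.Indep (C \ X) := hC.ssubset_indep (sdiff_ssubset_left_iff.2 hCX)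
  have hCe : C \ {e} ⊆ X ∪ ((C \ X) \ {e}) := fun f ⟨hf, hfe⟩ =>
    (em (f ∈ X)).imp id fun hfX => ⟨⟨hf, hfX⟩, hfe⟩
  obtain ⟨x, ⟨hxX, hxI⟩, hxIe⟩ := hX.exists_mem_closure_notMem_closure_sdiff hI he
    (M.closure_subset_closure hCe (hC.mem_closure_sdiff_singleton_of_mem he.1))
  obtain ⟨C', hC'sub, hC', hxC'⟩ := exists_isCircuit_of_mem_closure hxI fun h => h.2 hxX
  refine ⟨x, hxX, C', hC', by_contra fun heC' => hxIe ?_, hC'sub⟩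
  have hC'x : C' \ {x} ⊆ (C \ X) \ {e} := fun f ⟨hf, hfx⟩ =>
    ⟨(hC'sub hf).resolve_left hfx, by rintro rfl; exact heC' hf⟩
  exact M.closure_subset_closure hC'x (hC'.mem_closure_sdiff_singleton_of_mem hxC')

/-- Brylawski's modular short-circuit axiom. -/
theorem stmt13 (M : Matroid α) (hfin : M.E.Finite) (hsimple : SimpleM M)
    {X : Set α} (hXE : X ⊆ M.E) (hne : X.Nonempty) :
    ModularFlat M X ↔
      ∀ C : Set α, Circuit M C → ∀ e ∈ C \ X,
        ∃ x ∈ X, ∃ C' : Set α, Circuit M C' ∧ e ∈ C' ∧ C' ⊆ insert x (C \ X) := by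
  have : M.Finite := ⟨hfin⟩
  simp only [circuit_iff_isCircuit]
  change ModularFlat M X ↔ HasShortCircuits M X
  exact ⟨fun hX => hX.hasShortCircuits hne, fun hX => hX.modularFlat hsimple hXE⟩

end Paper
end
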